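/- Let q > 1 and let (n_k)_{k≥1} be a sequence of positive integers with n_{k+1}/n_k ≥ q for all k, and let p(x) = Σ_{j=1}^d a_j cos(2πjx) be an even trigonometric polynomial of degree d. Then there is a constant C = C(p, q, d) with the following property: for every N ∈ ℕ, all β, η > 0, all disjoint sets A, B ⊆ {1, …, N}, and all weights (c_k)_{k≤N} with 0 ≤ c_k ≤ 1 such that c_k ≤ N^{−β−η} for every k ∈ A and c_k ≥ N^{−β} for every k ∈ B, one has |∫₀¹ (Σ_{k∈A} c_k p(n_k x))·(Σ_{k∈B} c_k p(n_k x)) dx| ≤ C·N^{−η}·Σ_{k∈B} c_k². -/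

import Mathlib

/-!
Expanding the product, the integral is `∑_{k ∈ A} ∑_{l ∈ B} c_k c_l I(k, l)` with
`I(k, l) = ∫₀¹ p(n_k x) p(n_l x) dx`. By orthogonality of the `cos (2π m x)`, `|I(k, l)|` is at
most `(∑ |a_j|)²` and `I(k, l) = 0` unless `j n_k = j' n_l` for some `1 ≤ j, j' ≤ d`; by the gap
condition this forces `|k - l| ≤ L` once `d < q ^ L`. So each `l ∈ B` sees at most `2L + 1`
nonzero terms, each bounded by `c_k c_l (∑ |a_j|)² ≤ N^{-η} c_l² (∑ |a_j|)²`, since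
`c_k ≤ N^{-η} N^{-β} ≤ N^{-η} c_l`.
-/

open MeasureTheory Finset Real Set

/-- The even trigonometric polynomial p(x) = Σ_{j=1}^d a_j cos(2πjx). -/
noncomputable def trigPoly (d : ℕ) (a : ℕ → ℝ) (x : ℝ) : ℝ :=
  ∑ j ∈ Finset.Icc 1 d, a j * Real.cos (2 * Real.pi * j * x)

lemma integral_cos_two_pi_int_mul {m : ℤ} (hm : m ≠ 0) :
    ∫ x in (0 : ℝ)..1, cos (2 * π * m * x) = 0 := by
  have hc : 2 * π * m ≠ 0 := by positivity
  rw [intervalIntegral.integral_comp_mul_left cos hc, mul_zero, mul_one, integral_cos,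
    sin_zero, show 2 * π * m = (2 * m : ℤ) * π by push_cast; ring, sin_int_mul_pi]
  simp

lemma integral_cos_mul_cos {m m' : ℕ} (hm : 0 < m) (hm' : 0 < m') :
    ∫ x in (0 : ℝ)..1, cos (2 * π * m * x) * cos (2 * π * m' * x)
      = if m = m' then 1 / 2 else 0 := by
  have product_to_sum : ∀ x : ℝ, cos (2 * π * m * x) * cos (2 * π * m' * x)
      = (cos (2 * π * ((m + m' : ℤ) : ℝ) * x) + cos (2 * π * ((m - m' : ℤ) : ℝ) * x)) / 2 := by
    intro x
    push_cast
    rw [show 2 * π * (m + m' : ℝ) * x = 2 * π * m * x + 2 * π * m' * x by ring,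
      show 2 * π * (m - m' : ℝ) * x = 2 * π * m * x - 2 * π * m' * x by ring, cos_add, cos_sub]
    ring
  simp only [product_to_sum]
  rw [intervalIntegral.integral_div, intervalIntegral.integral_add
    ((by fun_prop : Continuous _).intervalIntegrable _ _)
    ((by fun_prop : Continuous _).intervalIntegrable _ _),
    integral_cos_two_pi_int_mul (by omega)]
  split_ifs with h
  · simp [h]
  · rw [integral_cos_two_pi_int_mul (by omega)]
    simp

lemma continuous_trigPoly (d : ℕ) (a : ℕ → ℝ) : Continuous (trigPoly d a) := by
  unfold trigPoly
  fun_prop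

lemma integral_trigPoly_mul_trigPoly (d : ℕ) (a : ℕ → ℝ) {m m' : ℕ} (hm : 0 < m)
    (hm' : 0 < m') :
    ∫ x in (0 : ℝ)..1, trigPoly d a (m * x) * trigPoly d a (m' * x)
      = ∑ j ∈ Finset.Icc 1 d, ∑ j' ∈ Finset.Icc 1 d,
          a j * a j' * if j * m = j' * m' then 1 / 2 else 0 := by
  have expand : ∀ x : ℝ, trigPoly d a (m * x) * trigPoly d a (m' * x)
      = ∑ j ∈ Finset.Icc 1 d, ∑ j' ∈ Finset.Icc 1 d, a j * a j' *
          (cos (2 * π * ((j * m : ℕ) : ℝ) * x) * cos (2 * π * ((j' * m' : ℕ) : ℝ) * x)) := by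
    intro x
    rw [trigPoly, trigPoly, sum_mul_sum]
    refine sum_congr rfl fun j _ => sum_congr rfl fun j' _ => ?_
    push_cast
    ring_nf
  simp only [expand]
  rw [intervalIntegral.integral_finsetSum
    fun _ _ => (by fun_prop : Continuous _).intervalIntegrable _ _]
  refine sum_congr rfl fun j hj => ?_
  rw [intervalIntegral.integral_finsetSum
    fun _ _ => (by fun_prop : Continuous _).intervalIntegrable _ _]
  refine sum_congr rfl fun j' hj' => ?_
  rw [Finset.mem_Icc] at hj hj'
  rw [intervalIntegral.integral_const_mul,
    integral_cos_mul_cos (Nat.mul_pos (by omega) hm) (Nat.mul_pos (by omega) hm')]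

lemma abs_integral_trigPoly_mul_trigPoly_le (d : ℕ) (a : ℕ → ℝ) {m m' : ℕ} (hm : 0 < m)
    (hm' : 0 < m') :
    |∫ x in (0 : ℝ)..1, trigPoly d a (m * x) * trigPoly d a (m' * x)|
      ≤ (∑ j ∈ Finset.Icc 1 d, |a j|) ^ 2 := by
  rw [integral_trigPoly_mul_trigPoly d a hm hm', sq, sum_mul_sum]
  refine (abs_sum_le_sum_abs _ _).trans (sum_le_sum fun j _ => ?_)
  refine (abs_sum_le_sum_abs _ _).trans (sum_le_sum fun j' _ => ?_)
  rw [abs_mul, abs_mul]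
  refine mul_le_of_le_one_right (by positivity) ?_
  split_ifs <;> norm_num

lemma exists_mul_eq_of_integral_trigPoly_mul_ne_zero (d : ℕ) (a : ℕ → ℝ) {m m' : ℕ}
    (hm : 0 < m) (hm' : 0 < m')
    (h : ∫ x in (0 : ℝ)..1, trigPoly d a (m * x) * trigPoly d a (m' * x) ≠ 0) :
    ∃ j ∈ Finset.Icc 1 d, ∃ j' ∈ Finset.Icc 1 d, j * m = j' * m' := by
  contrapose! h
  rw [integral_trigPoly_mul_trigPoly d a hm hm']
  exact sum_eq_zero fun j hj => sum_eq_zero fun j' hj' => by simp [h j hj j' hj']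

lemma pow_mul_le_of_le_mul_succ {q : ℝ} (hq : 0 ≤ q) {n : ℕ → ℕ}
    (hgap : ∀ k, q * (n k : ℝ) ≤ (n (k + 1) : ℝ)) (l m : ℕ) :
    q ^ m * (n l : ℝ) ≤ (n (l + m) : ℝ) := by
  induction m with
  | zero => simp
  | succ m ih =>
    calc q ^ (m + 1) * (n l : ℝ) = q * (q ^ m * n l) := by ring
      _ ≤ q * (n (l + m) : ℝ) := mul_le_mul_of_nonneg_left ih hq
      _ ≤ (n (l + m + 1) : ℝ) := hgap (l + m)

lemma le_add_of_mul_eq_mul {q : ℝ} (hq : 1 ≤ q) {n : ℕ → ℕ}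
    (hgap : ∀ k, q * (n k : ℝ) ≤ (n (k + 1) : ℝ)) {d L : ℕ} (hL : (d : ℝ) < q ^ L)
    {k l j j' : ℕ} (hl : 0 < n l) (hj : 1 ≤ j) (hj' : j' ≤ d) (h : j * n k = j' * n l) :
    k ≤ l + L := by
  by_contra! hlt
  obtain ⟨m, rfl⟩ : ∃ m, k = l + m := ⟨k - l, by omega⟩
  have hnk : n (l + m) ≤ d * n l :=
    calc n (l + m) ≤ j * n (l + m) := Nat.le_mul_of_pos_left _ hj
      _ = j' * n l := h
      _ ≤ d * n l := Nat.mul_le_mul_right _ hj'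
  have hqm : q ^ m ≤ d := le_of_mul_le_mul_right
    ((pow_mul_le_of_le_mul_succ (by linarith) hgap l m).trans (by exact_mod_cast hnk))
    (by exact_mod_cast hl)
  have := pow_le_pow_right₀ hq (show L ≤ m by omega)
  linarith

lemma sum_abs_le_of_ne_zero_mem_Icc (A : Finset ℕ) (f : ℕ → ℝ) (l L : ℕ) {b : ℝ} (hb0 : 0 ≤ b)
    (hb : ∀ k ∈ A, |f k| ≤ b) (hf : ∀ k ∈ A, f k ≠ 0 → k ∈ Finset.Icc (l - L) (l + L)) :
    ∑ k ∈ A, |f k| ≤ (2 * L + 1) * b := by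
  have hcard : #{k ∈ A | k ∈ Finset.Icc (l - L) (l + L)} ≤ 2 * L + 1 :=
    (Finset.card_le_card fun k hk => (mem_filter.mp hk).2).trans (by rw [Nat.card_Icc]; omega)
  calc ∑ k ∈ A, |f k| = ∑ k ∈ A with k ∈ Finset.Icc (l - L) (l + L), |f k| :=
        (sum_filter_of_ne fun k hk h => hf k hk (abs_ne_zero.mp h)).symm
    _ ≤ #{k ∈ A | k ∈ Finset.Icc (l - L) (l + L)} • b :=
        sum_le_card_nsmul _ _ _ fun k hk => hb k (mem_filter.mp hk).1
    _ ≤ (2 * L + 1) * b := by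
        rw [nsmul_eq_mul]
        gcongr
        exact_mod_cast hcard

lemma abs_sum_sum_mul_le_of_band (A B : Finset ℕ) (c : ℕ → ℝ) (I : ℕ → ℕ → ℝ) {M ε : ℝ}
    (L : ℕ) (hε : 0 ≤ ε) (hM : ∀ k l, |I k l| ≤ M)
    (hband : ∀ k l, I k l ≠ 0 → k ∈ Finset.Icc (l - L) (l + L))
    (hc : ∀ k ∈ A, ∀ l ∈ B, |c k| ≤ ε * |c l|) :
    |∑ k ∈ A, ∑ l ∈ B, c k * c l * I k l| ≤ (2 * L + 1) * M * ε * ∑ l ∈ B, c l ^ 2 := by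
  have hM0 : 0 ≤ M := (abs_nonneg _).trans (hM 0 0)
  have row : ∀ l ∈ B, ∑ k ∈ A, |c k * c l * I k l| ≤ (2 * L + 1) * (M * ε * c l ^ 2) := by
    intro l hl
    refine sum_abs_le_of_ne_zero_mem_Icc A _ l L (by positivity) (fun k hk => ?_)
      (fun k _ h => hband k l (right_ne_zero_of_mul h))
    rw [abs_mul, abs_mul, ← sq_abs (c l)]
    calc |c k| * |c l| * |I k l| ≤ ε * |c l| * |c l| * M := by
          gcongr
          exacts [hc k hk l hl, hM k l]
      _ = M * ε * |c l| ^ 2 := by ring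
  calc |∑ k ∈ A, ∑ l ∈ B, c k * c l * I k l|
      ≤ ∑ k ∈ A, ∑ l ∈ B, |c k * c l * I k l| :=
        (abs_sum_le_sum_abs _ _).trans (sum_le_sum fun k _ => abs_sum_le_sum_abs _ _)
    _ = ∑ l ∈ B, ∑ k ∈ A, |c k * c l * I k l| := sum_comm
    _ ≤ ∑ l ∈ B, (2 * L + 1) * (M * ε * c l ^ 2) := sum_le_sum row
    _ = (2 * L + 1) * M * ε * ∑ l ∈ B, c l ^ 2 := by
        rw [mul_sum]
        exact sum_congr rfl fun l _ => by ring

lemma integral_sum_mul_sum {ι : Type*} (A B : Finset ι) (c : ι → ℝ) (f : ι → ℝ → ℝ)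
    (hf : ∀ i, Continuous (f i)) (s t : ℝ) :
    ∫ x in s..t, (∑ k ∈ A, c k * f k x) * (∑ l ∈ B, c l * f l x)
      = ∑ k ∈ A, ∑ l ∈ B, c k * c l * ∫ x in s..t, f k x * f l x := by
  have integrand_continuous : ∀ k l, Continuous fun x => c k * c l * (f k x * f l x) :=
    fun k l => continuous_const.mul ((hf k).mul (hf l))
  simp_rw [sum_mul_sum, mul_mul_mul_comm (c _) (f _ _) (c _) (f _ _)]
  rw [intervalIntegral.integral_finsetSum fun k _ =>
    (continuous_finsetSum B fun l _ => integrand_continuous k l).intervalIntegrable _ _]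
  refine sum_congr rfl fun k _ => ?_
  rw [intervalIntegral.integral_finsetSum fun l _ =>
    (integrand_continuous k l).intervalIntegrable _ _]
  simp_rw [intervalIntegral.integral_const_mul]

lemma abs_le_rpow_neg_mul_abs {x β η u v : ℝ} (hx : 0 ≤ x) (hβη : 0 < β + η) (hu : 0 ≤ u)
    (hux : u ≤ x ^ (-β - η)) (hxv : x ^ (-β) ≤ v) : |u| ≤ x ^ (-η) * |v| := by
  have split : x ^ (-β - η) = x ^ (-η) * x ^ (-β) := by
    -- `rpow_add'` (not `rpow_add`) also covers `x = 0`, where `0 ^ (-β - η) = 0`.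
    rw [← rpow_add' hx (by linarith)]
    ring_nf
  rw [abs_of_nonneg hu]
  calc u ≤ x ^ (-η) * x ^ (-β) := split ▸ hux
    _ ≤ x ^ (-η) * |v| := by gcongr; exact hxv.trans (le_abs_self v)

lemma mem_Icc_of_integral_trigPoly_mul_ne_zero {q : ℝ} (hq : 1 ≤ q) {n : ℕ → ℕ}
    (hpos : ∀ k, 0 < n k) (hgap : ∀ k, q * (n k : ℝ) ≤ (n (k + 1) : ℝ)) {d L : ℕ}
    (hL : (d : ℝ) < q ^ L) (a : ℕ → ℝ) {k l : ℕ}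
    (h : ∫ x in (0 : ℝ)..1, trigPoly d a (n k * x) * trigPoly d a (n l * x) ≠ 0) :
    k ∈ Finset.Icc (l - L) (l + L) := by
  obtain ⟨j, hj, j', hj', hjj'⟩ :=
    exists_mul_eq_of_integral_trigPoly_mul_ne_zero d a (hpos k) (hpos l) h
  rw [Finset.mem_Icc] at hj hj' ⊢
  have hkl := le_add_of_mul_eq_mul hq hgap hL (hpos l) hj.1 hj'.2 hjj'
  have hlk := le_add_of_mul_eq_mul hq hgap hL (hpos k) hj'.1 hj.2 hjj'.symm
  omega

theorem decorrelation_of_separated_weight_classes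
    (q : ℝ) (hq : 1 < q) (n : ℕ → ℕ) (hpos : ∀ k, 0 < n k)
    (hgap : ∀ k, q * (n k : ℝ) ≤ (n (k + 1) : ℝ))
    (d : ℕ) (a : ℕ → ℝ) :
    ∃ C : ℝ, ∀ (N : ℕ) (β η : ℝ), 0 < β → 0 < η →
      ∀ (A B : Finset ℕ), A ⊆ Finset.Icc 1 N → B ⊆ Finset.Icc 1 N → Disjoint A B →
      ∀ c : ℕ → ℝ, (∀ k, 0 ≤ c k ∧ c k ≤ 1) →
        (∀ k ∈ A, c k ≤ (N : ℝ) ^ (-β - η)) →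
        (∀ k ∈ B, (N : ℝ) ^ (-β) ≤ c k) →
        |∫ x in Set.Ico (0:ℝ) 1,
            (∑ k ∈ A, c k * trigPoly d a ((n k : ℝ) * x)) *
              (∑ k ∈ B, c k * trigPoly d a ((n k : ℝ) * x))|
          ≤ C * (N : ℝ) ^ (-η) * ∑ k ∈ B, c k ^ 2 := by
  obtain ⟨L, hL⟩ := pow_unbounded_of_one_lt (d : ℝ) hq
  refine ⟨(2 * L + 1) * (∑ j ∈ Finset.Icc 1 d, |a j|) ^ 2,
    fun N β η hβ hη A B _ _ _ c hc hcA hcB => ?_⟩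
  rw [integral_Ico_eq_integral_Ioo, ← integral_Ioc_eq_integral_Ioo,
    ← intervalIntegral.integral_of_le zero_le_one,
    integral_sum_mul_sum A B c (fun k x => trigPoly d a (n k * x))
      (fun k => (continuous_trigPoly d a).comp (continuous_const_mul _))]
  exact abs_sum_sum_mul_le_of_band A B c _ L (by positivity)
    (fun k l => abs_integral_trigPoly_mul_trigPoly_le d a (hpos k) (hpos l))
    (fun k l => mem_Icc_of_integral_trigPoly_mul_ne_zero hq.le hpos hgap hL a)
    (fun k hk l hl => abs_le_rpow_neg_mul_abs (Nat.cast_nonneg N) (by linarith) (hc k).1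
      (hcA k hk) (hcB l hl))
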